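/- Let u be a subsolution and set v = (T⁺u + T⁺(T⁻u) + T⁻(T⁺u) + T⁻u)/4. Then v is a subsolution, v = u on A_u, and v is free at every point not in A_u (where A_u = {x : T⁺u(x) = u(x) = T⁻u(x)}). -/

import Mathlib

/-!
For a subsolution `u` the families defining `T⁺u(x)` and `T⁻u(x)` are bounded by `u(x)`, both
images are again subsolutions, and they satisfy `T⁺u ≤ T⁺T⁻u ≤ u ≤ T⁻T⁺u ≤ T⁻u`.
So `v`, an average of four subsolutions, is a subsolution, and it equals `u` wherever this chain
collapses. Off `A_u` we have `T⁺u < T⁻u`; bounding the four terms of `v` separately gives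
`T⁺v ≤ (3 T⁺u + u) / 4 < v` and `v < (u + 3 T⁻u) / 4 ≤ T⁻v`.
-/

noncomputable def Tm {M : Type*} (c : M × M → ℝ) (w : M → ℝ) : M → ℝ :=
  fun x => ⨅ y, (w y + c (y, x))

noncomputable def Tp {M : Type*} (c : M × M → ℝ) (w : M → ℝ) : M → ℝ :=
  fun x => ⨆ y, (w y - c (x, y))

section LaxOleinik

variable {M : Type*} {c : M × M → ℝ} {w w₁ w₂ : M → ℝ}

def IsSubsolution (c : M × M → ℝ) (w : M → ℝ) : Prop :=
  ∀ x y, w y - w x ≤ c (x, y)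

theorem IsSubsolution.bddAbove_Tp (hw : IsSubsolution c w) (x : M) :
    BddAbove (Set.range fun y => w y - c (x, y)) :=
  ⟨w x, by rintro _ ⟨y, rfl⟩; linarith [hw x y]⟩

theorem IsSubsolution.bddBelow_Tm (hw : IsSubsolution c w) (x : M) :
    BddBelow (Set.range fun y => w y + c (y, x)) :=
  ⟨w x, by rintro _ ⟨y, rfl⟩; linarith [hw y x]⟩

theorem IsSubsolution.sub_le_Tp (hw : IsSubsolution c w) (x y : M) :
    w y - c (x, y) ≤ Tp c w x :=
  le_ciSup (hw.bddAbove_Tp x) y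

theorem IsSubsolution.Tm_le_add (hw : IsSubsolution c w) (x y : M) :
    Tm c w y ≤ w x + c (x, y) :=
  ciInf_le (hw.bddBelow_Tm y) x

theorem IsSubsolution.Tp_le [Nonempty M] (hw : IsSubsolution c w) (x : M) : Tp c w x ≤ w x :=
  ciSup_le fun y => by linarith [hw x y]

theorem IsSubsolution.le_Tm [Nonempty M] (hw : IsSubsolution c w) (x : M) : w x ≤ Tm c w x :=
  le_ciInf fun y => by linarith [hw y x]

theorem isSubsolution_Tp [Nonempty M] (hw : IsSubsolution c w) : IsSubsolution c (Tp c w) :=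
  fun x y => by linarith [hw.Tp_le y, hw.sub_le_Tp x y]

theorem isSubsolution_Tm [Nonempty M] (hw : IsSubsolution c w) : IsSubsolution c (Tm c w) :=
  fun x y => by linarith [hw.le_Tm x, hw.Tm_le_add x y]

theorem IsSubsolution.Tp_mono (hw₂ : IsSubsolution c w₂) (h : ∀ y, w₁ y ≤ w₂ y) (x : M) :
    Tp c w₁ x ≤ Tp c w₂ x :=
  ciSup_mono (hw₂.bddAbove_Tp x) fun y => by linarith [h y]

theorem IsSubsolution.Tm_mono (hw₁ : IsSubsolution c w₁) (h : ∀ y, w₁ y ≤ w₂ y) (x : M) :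
    Tm c w₁ x ≤ Tm c w₂ x :=
  ciInf_mono (hw₁.bddBelow_Tm x) fun y => by linarith [h y]

theorem IsSubsolution.Tp_Tm_le [Nonempty M] (hw : IsSubsolution c w) (x : M) :
    Tp c (Tm c w) x ≤ w x :=
  ciSup_le fun y => by linarith [hw.Tm_le_add x y]

theorem IsSubsolution.le_Tm_Tp [Nonempty M] (hw : IsSubsolution c w) (x : M) :
    w x ≤ Tm c (Tp c w) x :=
  le_ciInf fun y => by linarith [hw.sub_le_Tp y x]

theorem IsSubsolution.Tp_le_Tp_Tm [Nonempty M] (hw : IsSubsolution c w) (x : M) :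
    Tp c w x ≤ Tp c (Tm c w) x :=
  (isSubsolution_Tm hw).Tp_mono hw.le_Tm x

theorem IsSubsolution.Tm_Tp_le_Tm [Nonempty M] (hw : IsSubsolution c w) (x : M) :
    Tm c (Tp c w) x ≤ Tm c w x :=
  (isSubsolution_Tp hw).Tm_mono hw.Tp_le x

noncomputable def laxOleinikAverage (c : M × M → ℝ) (w : M → ℝ) : M → ℝ :=
  fun x => (Tp c w x + Tp c (Tm c w) x + Tm c (Tp c w) x + Tm c w x) / 4

theorem isSubsolution_laxOleinikAverage [Nonempty M] (hw : IsSubsolution c w) :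
    IsSubsolution c (laxOleinikAverage c w) := fun x y => by
  have hp := isSubsolution_Tp hw
  have hm := isSubsolution_Tm hw
  simp only [laxOleinikAverage]
  linarith [hp x y, isSubsolution_Tp hm x y, isSubsolution_Tm hp x y, hm x y]

theorem IsSubsolution.laxOleinikAverage_eq [Nonempty M] (hw : IsSubsolution c w) {x : M}
    (hp : Tp c w x = w x) (hm : w x = Tm c w x) : laxOleinikAverage c w x = w x := by
  simp only [laxOleinikAverage]
  linarith [hw.Tp_le_Tp_Tm x, hw.Tp_Tm_le x, hw.le_Tm_Tp x, hw.Tm_Tp_le_Tm x]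

theorem IsSubsolution.Tp_laxOleinikAverage_lt [Nonempty M] (hw : IsSubsolution c w) {x : M}
    (hx : Tp c w x < Tm c w x) : Tp c (laxOleinikAverage c w) x < laxOleinikAverage c w x := by
  have hp := isSubsolution_Tp hw
  calc Tp c (laxOleinikAverage c w) x ≤ (3 * Tp c w x + w x) / 4 := ciSup_le fun y => by
        simp only [laxOleinikAverage]
        linarith [hp x y, hw.Tp_Tm_le y, hw.sub_le_Tp x y, hp.Tm_le_add x y, hw.Tm_le_add x y]
    _ < laxOleinikAverage c w x := by
        simp only [laxOleinikAverage]
        linarith [hw.Tp_le_Tp_Tm x, hw.le_Tm_Tp x]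

theorem IsSubsolution.lt_Tm_laxOleinikAverage [Nonempty M] (hw : IsSubsolution c w) {x : M}
    (hx : Tp c w x < Tm c w x) : laxOleinikAverage c w x < Tm c (laxOleinikAverage c w) x := by
  have hm := isSubsolution_Tm hw
  calc laxOleinikAverage c w x < (w x + 3 * Tm c w x) / 4 := by
        simp only [laxOleinikAverage]
        linarith [hw.Tp_Tm_le x, hw.Tm_Tp_le_Tm x]
    _ ≤ Tm c (laxOleinikAverage c w) x := le_ciInf fun y => by
        simp only [laxOleinikAverage]
        linarith [hw.sub_le_Tp y x, hm.sub_le_Tp y x, hw.le_Tm_Tp y, hw.Tm_le_add y x, hm y x]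

end LaxOleinik

theorem average_subsolution_free_general {M : Type*} [Nonempty M]
    (c : M × M → ℝ) (u : M → ℝ)
    (hsub : ∀ x y, u y - u x ≤ c (x, y))
    (v : M → ℝ)
    (hv : v = fun x => (Tp c u x + Tp c (Tm c u) x + Tm c (Tp c u) x + Tm c u x) / 4) :
    (∀ x y, v y - v x ≤ c (x, y)) ∧
    (∀ x, (Tp c u x = u x ∧ u x = Tm c u x) → v x = u x) ∧
    (∀ x, ¬ (Tp c u x = u x ∧ u x = Tm c u x) →
      Tp c v x < v x ∧ v x < Tm c v x) := by
  have hu : IsSubsolution c u := hsub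
  obtain rfl : v = laxOleinikAverage c u := hv
  refine ⟨isSubsolution_laxOleinikAverage hu, fun x ⟨hp, hm⟩ => hu.laxOleinikAverage_eq hp hm,
    fun x hx => ?_⟩
  have hlt : Tp c u x < Tm c u x := by
    have := hu.Tp_le x
    have := hu.le_Tm x
    by_contra! hge
    exact hx ⟨by linarith, by linarith⟩
  exact ⟨hu.Tp_laxOleinikAverage_lt hlt, hu.lt_Tm_laxOleinikAverage hlt⟩

theorem average_subsolution_free {M : Type*} [Nonempty M]
    (c : M × M → ℝ) (u : M → ℝ)
    (hc : ∃ K : ℝ, ∀ p, |c p| ≤ K) (hu : ∃ C : ℝ, ∀ x, |u x| ≤ C)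
    (hsub : ∀ x y, u y - u x ≤ c (x, y))
    (v : M → ℝ)
    (hv : v = fun x => (Tp c u x + Tp c (Tm c u) x + Tm c (Tp c u) x + Tm c u x) / 4) :
    (∀ x y, v y - v x ≤ c (x, y)) ∧
    (∀ x, (Tp c u x = u x ∧ u x = Tm c u x) → v x = u x) ∧
    (∀ x, ¬ (Tp c u x = u x ∧ u x = Tm c u x) →
      Tp c v x < v x ∧ v x < Tm c v x) :=
  average_subsolution_free_general c u hsub v hv
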